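/- Let m ≥ 1 and let (a_J)_{J∈ℕ^m} be i.i.d. complex random variables with E[(log(1+|a_J|))^m] < ∞, and for each n let G_n be the associated random elliptic polynomial of degree n. Then almost surely, for every z ∈ ℂ^m, limsup_{n→∞} (1/n) log|G_n(z)| ≤ (1/2) log(1+‖z‖²). -/

import Mathlib

open MeasureTheory ProbabilityTheory Filter

/-- The multinomial coefficient `C(n,J) = n! / ((n-|J|)! j₁! ⋯ j_m!)`. -/
noncomputable def multiCoeff (m n : ℕ) (J : Fin m → ℕ) : ℝ :=
  (n.factorial : ℝ) / (((n - ∑ i, J i).factorial : ℝ) * ∏ i, ((J i).factorial : ℝ))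

/-- The random elliptic polynomial `G_n(z) = ∑_{|J| ≤ n} a_J C(n,J)^(1/2) z^J`. -/
noncomputable def ellipticPoly {Ω : Type*} {m : ℕ} (a : (Fin m → ℕ) → Ω → ℂ)
    (n : ℕ) (ω : Ω) (z : Fin m → ℂ) : ℂ :=
  ∑ J ∈ (Fintype.piFinset fun _ : Fin m => Finset.range (n + 1)).filter
      (fun J => ∑ i, J i ≤ n),
    a J ω * (Real.sqrt (multiCoeff m n J) : ℂ) * ∏ i, z i ^ J i

/-!
Cauchy–Schwarz against the multinomial identity `∑_{|J| ≤ n} C(n,J) |z^J|² = (1 + ‖z‖²)^n`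
gives `|G_n(z)| ≤ max_{|J| ≤ n} |a_J| · (n+1)^{m/2} · (1 + ‖z‖²)^{n/2}`, so it suffices that
almost surely `log (1 + |a_J|) ≤ δ |J| + C_δ` for every `δ > 0`. By identical distribution,
`∑_J P(log (1 + |a_J|) > δ |J|)` is the expected number of multi-indices with
`|J| < log (1 + |a_0|) / δ`, which is at most `E (log (1 + |a_0|) / δ + 1)^m < ∞`; the first
Borel–Cantelli lemma then leaves only finitely many exceptional `J`.
-/

open Finset Topology
open scoped ENNReal

def multiIndicesLE (m n : ℕ) : Finset (Fin m → ℕ) :=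
  (Fintype.piFinset fun _ : Fin m => range (n + 1)).filter fun J => ∑ i, J i ≤ n

lemma mem_multiIndicesLE {m n : ℕ} {J : Fin m → ℕ} : J ∈ multiIndicesLE m n ↔ ∑ i, J i ≤ n := by
  refine ⟨fun h => (mem_filter.1 h).2, fun h => mem_filter.2 ⟨?_, h⟩⟩
  exact Fintype.mem_piFinset.2 fun i =>
    mem_range_succ_iff.2 ((single_le_sum (fun j _ => Nat.zero_le (J j)) (mem_univ i)).trans h)

lemma card_multiIndicesLE_le (m n : ℕ) : #(multiIndicesLE m n) ≤ (n + 1) ^ m :=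
  (card_filter_le _ _).trans_eq (by simp)

lemma multiCoeff_nonneg (m n : ℕ) (J : Fin m → ℕ) : 0 ≤ multiCoeff m n J := by
  unfold multiCoeff
  positivity

lemma multiCoeff_eq_multinomial {m n : ℕ} {J : Fin m → ℕ} (hJ : ∑ i, J i ≤ n) :
    multiCoeff m n J = Nat.multinomial univ (Fin.cons (n - ∑ i, J i) J : Fin (m + 1) → ℕ) := by
  have spec := Nat.multinomial_spec univ (Fin.cons (n - ∑ i, J i) J : Fin (m + 1) → ℕ)
  rw [Fin.sum_univ_succ, Fin.prod_univ_succ] at spec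
  simp only [Fin.cons_zero, Fin.cons_succ, Nat.sub_add_cancel hJ] at spec
  rw [multiCoeff, div_eq_iff (by positivity), ← spec]
  push_cast
  ring

-- The multinomial theorem in `m + 1` variables, the extra exponent being `n - |J|`.
lemma sum_multiCoeff_mul_prod_pow (m n : ℕ) (w : Fin m → ℝ) :
    ∑ J ∈ multiIndicesLE m n, multiCoeff m n J * ∏ i, w i ^ J i = (1 + ∑ i, w i) ^ n := by
  have h := Finset.sum_pow_eq_sum_piAntidiag univ (Fin.cons 1 w : Fin (m + 1) → ℝ) n
  rw [Fin.sum_univ_succ] at h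
  simp only [Fin.cons_zero, Fin.cons_succ] at h
  rw [h]
  refine sum_nbij' (fun J => Fin.cons (n - ∑ i, J i) J) Fin.tail ?_ ?_ ?_ ?_ ?_
  · intro J hJ
    rw [mem_multiIndicesLE] at hJ
    simp [mem_piAntidiag, Fin.sum_univ_succ, Nat.sub_add_cancel hJ]
  · intro K hK
    rw [mem_piAntidiag, Fin.sum_univ_succ] at hK
    rw [mem_multiIndicesLE]
    exact Nat.le.intro ((add_comm _ _).trans hK.1)
  · intro J _
    exact Fin.tail_cons _ _
  · intro K hK
    rw [mem_piAntidiag, Fin.sum_univ_succ] at hK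
    rw [← Fin.cons_self_tail K]
    congr 1
    simp [Fin.tail, ← hK.1]
  · intro J hJ
    rw [mem_multiIndicesLE] at hJ
    rw [multiCoeff_eq_multinomial hJ, Fin.prod_univ_succ]
    simp

lemma tendsto_add_mul_log_add_one_div (C D : ℝ) :
    Tendsto (fun n : ℕ => (C + D * Real.log (n + 1)) / n) atTop (𝓝 0) := by
  have hlog : Tendsto (fun n : ℕ => Real.log (n + 1) / n) atTop (𝓝 0) := by
    have := (Real.tendsto_pow_log_div_mul_add_atTop 1 (-1) 1 one_ne_zero).comp
      (tendsto_atTop_add_const_right atTop 1 tendsto_natCast_atTop_atTop)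
    simpa [Function.comp_def] using this
  have hC : Tendsto (fun n : ℕ => C / n) atTop (𝓝 0) :=
    tendsto_const_nhds.div_atTop tendsto_natCast_atTop_atTop
  simpa [add_div, mul_div_assoc] using hC.add (hlog.const_mul D)

section EllipticPoly

variable {Ω : Type*} {m : ℕ} {a : (Fin m → ℕ) → Ω → ℂ} {ω : Ω}

lemma ellipticPoly_eq_sum (n : ℕ) (z : Fin m → ℂ) :
    ellipticPoly a n ω z =
      ∑ J ∈ multiIndicesLE m n, a J ω * (√(multiCoeff m n J) : ℂ) * ∏ i, z i ^ J i :=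
  rfl

lemma norm_ellipticPoly_le {n : ℕ} {B : ℝ} (hB : ∀ J ∈ multiIndicesLE m n, ‖a J ω‖ ≤ B) (z : Fin m → ℂ) :
    ‖ellipticPoly a n ω z‖ ≤ B * √((n + 1) ^ m) * √((1 + ∑ i, ‖z i‖ ^ 2) ^ n) := by
  have hB0 : 0 ≤ B := (norm_nonneg _).trans (hB 0 (mem_multiIndicesLE.2 (by simp)))
  set x : (Fin m → ℕ) → ℝ := fun J => √(multiCoeff m n J) * ∏ i, ‖z i‖ ^ J i
  calc ‖ellipticPoly a n ω z‖ ≤ ∑ J ∈ multiIndicesLE m n, B * x J := by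
        rw [ellipticPoly_eq_sum]
        refine (norm_sum_le _ _).trans (sum_le_sum fun J hJ => ?_)
        rw [norm_mul, norm_mul, Complex.norm_real, Real.norm_of_nonneg (Real.sqrt_nonneg _),
          norm_prod, mul_assoc]
        simp only [norm_pow, x]
        gcongr
        exact hB J hJ
    _ = B * ∑ J ∈ multiIndicesLE m n, 1 * x J := by simp [mul_sum]
    _ ≤ B * (√(∑ J ∈ multiIndicesLE m n, 1 ^ 2) * √(∑ J ∈ multiIndicesLE m n, x J ^ 2)) := by
        gcongr
        exact Real.sum_mul_le_sqrt_mul_sqrt _ _ _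
    _ ≤ B * √((n + 1) ^ m) * √((1 + ∑ i, ‖z i‖ ^ 2) ^ n) := by
        rw [← mul_assoc]
        gcongr
        · simp only [one_pow, sum_const, nsmul_eq_mul, mul_one]
          exact_mod_cast card_multiIndicesLE_le m n
        · rw [← sum_multiCoeff_mul_prod_pow m n]
          refine (sum_congr rfl fun J _ => ?_).le
          rw [mul_pow, Real.sq_sqrt (multiCoeff_nonneg m n J), ← prod_pow]
          simp only [← pow_mul, mul_comm]

lemma log_norm_ellipticPoly_le {δ C : ℝ} (hδ : 0 ≤ δ)
    (h : ∀ J, Real.log (1 + ‖a J ω‖) ≤ δ * ((∑ i, J i : ℕ) : ℝ) + C) (n : ℕ) (z : Fin m → ℂ) :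
    Real.log ‖ellipticPoly a n ω z‖ ≤
      δ * n + C + m / 2 * Real.log (n + 1) + n / 2 * Real.log (1 + ∑ i, ‖z i‖ ^ 2) := by
  have hC : 0 ≤ C := by simpa using (Real.log_nonneg (by simp)).trans (h 0)
  have hs : 0 ≤ ∑ i, ‖z i‖ ^ 2 := by positivity
  have hB : ∀ J ∈ multiIndicesLE m n, ‖a J ω‖ ≤ Real.exp (δ * n + C) := by
    intro J hJ
    have hJn : ((∑ i, J i : ℕ) : ℝ) ≤ n := by exact_mod_cast mem_multiIndicesLE.1 hJ
    calc ‖a J ω‖ ≤ 1 + ‖a J ω‖ := by linarith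
      _ = Real.exp (Real.log (1 + ‖a J ω‖)) := (Real.exp_log (by positivity)).symm
      _ ≤ Real.exp (δ * n + C) := by gcongr; exact (h J).trans (by gcongr)
  have hlog : Real.log (Real.exp (δ * n + C) * √(((n : ℝ) + 1) ^ m) *
      √((1 + ∑ i, ‖z i‖ ^ 2) ^ n)) =
      δ * n + C + m / 2 * Real.log (n + 1) + n / 2 * Real.log (1 + ∑ i, ‖z i‖ ^ 2) := by
    rw [Real.log_mul (by positivity) (by positivity), Real.log_mul (by positivity) (by positivity),
      Real.log_exp, Real.log_sqrt (by positivity), Real.log_sqrt (by positivity), Real.log_pow,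
      Real.log_pow]
    ring
  rw [← hlog]
  -- `Real.log 0 = 0`, so a vanishing `G_n(z)` needs a nonnegative right-hand side.
  rcases (norm_nonneg (ellipticPoly a n ω z)).eq_or_lt with h0 | hpos
  · have h1 : 0 ≤ Real.log (n + 1) := Real.log_nonneg (by linarith [n.cast_nonneg (α := ℝ)])
    have h2 : 0 ≤ Real.log (1 + ∑ i, ‖z i‖ ^ 2) := Real.log_nonneg (by linarith)
    rw [← h0, Real.log_zero, hlog]
    exact add_nonneg (add_nonneg (add_nonneg (by positivity) hC) (mul_nonneg (by positivity) h1))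
      (mul_nonneg (by positivity) h2)
  · exact Real.log_le_log hpos (norm_ellipticPoly_le hB z)

lemma limsup_log_norm_ellipticPoly_le
    (h : ∀ δ > 0, ∃ C, ∀ J, Real.log (1 + ‖a J ω‖) ≤ δ * ((∑ i, J i : ℕ) : ℝ) + C)
    (z : Fin m → ℂ) :
    limsup (fun n : ℕ => (((1 / n : ℝ) * Real.log ‖ellipticPoly a n ω z‖ : ℝ) : EReal)) atTop ≤
      (((1 / 2) * Real.log (1 + ∑ i, ‖z i‖ ^ 2) : ℝ) : EReal) := by
  set V := 1 / 2 * Real.log (1 + ∑ i, ‖z i‖ ^ 2)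
  refine EReal.le_of_forall_lt_iff_le.1 fun t ht => ?_
  have hε : 0 < (t - V) / 2 := by linarith [EReal.coe_lt_coe_iff.1 ht]
  obtain ⟨C, hC⟩ := h _ hε
  refine limsup_le_of_le (by isBoundedDefault) ?_
  filter_upwards [(tendsto_add_mul_log_add_one_div C (m / 2)).eventually (gt_mem_nhds hε),
    eventually_gt_atTop 0] with n hsmall hn
  have hn' : (0 : ℝ) < n := by exact_mod_cast hn
  rw [EReal.coe_le_coe_iff]
  calc 1 / n * Real.log ‖ellipticPoly a n ω z‖
      ≤ 1 / n * ((t - V) / 2 * n + C + m / 2 * Real.log (n + 1) +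
          n / 2 * Real.log (1 + ∑ i, ‖z i‖ ^ 2)) := by
        gcongr
        exact log_norm_ellipticPoly_le hε.le hC n z
    _ = (t - V) / 2 + (C + m / 2 * Real.log (n + 1)) / n + V := by
        field_simp
        ring
    _ ≤ t := by linarith

end EllipticPoly

lemma exists_le_mul_add_of_finite {ι : Type*} {f s : ι → ℝ} {δ : ℝ}
    (h : {i | δ * s i < f i}.Finite) : ∃ C, ∀ i, f i ≤ δ * s i + C := by
  obtain ⟨C, hC⟩ := (h.image fun i => f i - δ * s i).bddAbove
  refine ⟨max C 0, fun i => ?_⟩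
  by_cases hi : δ * s i < f i
  · linarith [hC (Set.mem_image_of_mem _ hi), le_max_left C 0]
  · linarith [le_max_right C 0]

lemma encard_setOf_sum_lt_le (m : ℕ) {t : ℝ} (ht : 0 ≤ t) :
    ({J : Fin m → ℕ | ((∑ i, J i : ℕ) : ℝ) < t}.encard : ℝ≥0∞) ≤
      ENNReal.ofReal ((t + 1) ^ m) := by
  have hsub : {J : Fin m → ℕ | ((∑ i, J i : ℕ) : ℝ) < t} ⊆
      (Fintype.piFinset fun _ => range (⌊t⌋₊ + 1) : Finset (Fin m → ℕ)) := by
    intro J hJ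
    rw [mem_coe, Fintype.mem_piFinset]
    intro i
    rw [mem_range]
    have hJi : (J i : ℝ) < t := by
      refine lt_of_le_of_lt ?_ hJ
      exact_mod_cast single_le_sum (fun j _ => Nat.zero_le (J j)) (mem_univ i)
    exact Nat.lt_succ_of_le (Nat.le_floor hJi.le)
  calc ({J : Fin m → ℕ | ((∑ i, J i : ℕ) : ℝ) < t}.encard : ℝ≥0∞)
      ≤ (((⌊t⌋₊ + 1) ^ m : ℕ) : ℝ≥0∞) := by
        have := Set.encard_mono hsub
        rw [Set.encard_coe_eq_coe_finsetCard, Fintype.card_piFinset] at this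
        simpa using ENat.toENNReal_le.2 this
    _ = ENNReal.ofReal (((⌊t⌋₊ : ℝ) + 1) ^ m) := by
        rw [ENNReal.ofReal_pow (by positivity)]
        norm_cast
    _ ≤ ENNReal.ofReal ((t + 1) ^ m) := by
        gcongr
        exact Nat.floor_le ht

lemma tsum_measure_preimage_eq_lintegral_encard {Ω α ι : Type*} [MeasurableSpace Ω]
    [MeasurableSpace α] [Countable ι] {μ : Measure Ω} {X : ι → Ω → α} {Y : Ω → α}
    (hY : AEMeasurable Y μ) (hX : ∀ i, IdentDistrib (X i) Y μ μ) {S : ι → Set α}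
    (hS : ∀ i, MeasurableSet (S i)) :
    ∑' i, μ (X i ⁻¹' S i) = ∫⁻ ω, ({i | Y ω ∈ S i}.encard : ℝ≥0∞) ∂μ := by
  have hnull : ∀ i, NullMeasurableSet (Y ⁻¹' S i) μ := fun i => hY.nullMeasurable (hS i)
  calc ∑' i, μ (X i ⁻¹' S i) = ∑' i, ∫⁻ ω, (Y ⁻¹' S i).indicator 1 ω ∂μ := by
        refine tsum_congr fun i => ?_
        rw [(hX i).measure_mem_eq (hS i), lintegral_indicator_one₀ (hnull i)]
    _ = ∫⁻ ω, ∑' i, (Y ⁻¹' S i).indicator 1 ω ∂μ :=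
        (lintegral_tsum fun i => aemeasurable_one.indicator₀ (hnull i)).symm
    _ = ∫⁻ ω, ({i | Y ω ∈ S i}.encard : ℝ≥0∞) ∂μ := by
        refine lintegral_congr fun ω => ?_
        rw [← ENNReal.tsum_set_one, _root_.tsum_subtype {i | Y ω ∈ S i} fun _ => 1]
        rfl

lemma lintegral_ofReal_mul_add_pow_lt_top {Ω : Type*} [MeasurableSpace Ω] {μ : Measure Ω}
    [IsFiniteMeasure μ] {f : Ω → ℝ} (hf : 0 ≤ f) {c d : ℝ} (hc : 0 ≤ c) (hd : 0 ≤ d) {m : ℕ}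
    (h : ∫⁻ ω, ENNReal.ofReal (f ω ^ m) ∂μ < ∞) :
    ∫⁻ ω, ENNReal.ofReal ((c * f ω + d) ^ m) ∂μ < ∞ := by
  have hle : ∀ ω, ENNReal.ofReal ((c * f ω + d) ^ m) ≤
      ENNReal.ofReal (2 ^ (m - 1) * c ^ m) * ENNReal.ofReal (f ω ^ m) +
        ENNReal.ofReal (2 ^ (m - 1) * d ^ m) := by
    intro ω
    rw [← ENNReal.ofReal_mul (by positivity),
      ← ENNReal.ofReal_add (mul_nonneg (by positivity) (pow_nonneg (hf ω) m)) (by positivity)]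
    refine ENNReal.ofReal_le_ofReal ?_
    calc (c * f ω + d) ^ m ≤ 2 ^ (m - 1) * ((c * f ω) ^ m + d ^ m) :=
          add_pow_le (mul_nonneg hc (hf ω)) hd m
      _ = 2 ^ (m - 1) * c ^ m * f ω ^ m + 2 ^ (m - 1) * d ^ m := by ring
  refine (lintegral_mono hle).trans_lt ?_
  rw [lintegral_add_right _ measurable_const, lintegral_const_mul' _ _ ENNReal.ofReal_ne_top,
    lintegral_const]
  exact ENNReal.add_lt_top.2 ⟨ENNReal.mul_lt_top ENNReal.ofReal_lt_top h,
    ENNReal.mul_lt_top ENNReal.ofReal_lt_top (measure_lt_top μ _)⟩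

section Coefficients

variable {Ω : Type*} [MeasurableSpace Ω] {μ : Measure Ω} [IsFiniteMeasure μ] {m : ℕ}
  {a : (Fin m → ℕ) → Ω → ℂ}

lemma ae_finite_setOf_mul_lt_log_one_add_norm (hident : ∀ J, IdentDistrib (a J) (a 0) μ μ)
    (hmom : ∫⁻ ω, ENNReal.ofReal ((Real.log (1 + ‖a 0 ω‖)) ^ m) ∂μ < ⊤) {δ : ℝ} (hδ : 0 < δ) :
    ∀ᵐ ω ∂μ, {J : Fin m → ℕ | δ * ((∑ i, J i : ℕ) : ℝ) < Real.log (1 + ‖a J ω‖)}.Finite := by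
  have hL0 : ∀ x : ℂ, 0 ≤ Real.log (1 + ‖x‖) := fun x =>
    Real.log_nonneg (le_add_of_nonneg_right (norm_nonneg x))
  set S : (Fin m → ℕ) → Set ℂ := fun J => {x | δ * ((∑ i, J i : ℕ) : ℝ) < Real.log (1 + ‖x‖)}
  have hS : ∀ J, MeasurableSet (S J) := fun J => measurableSet_lt measurable_const (by fun_prop)
  refine ae_finite_setOfPred_mem (s := fun J => a J ⁻¹' S J) (ne_of_lt ?_)
  rw [tsum_measure_preimage_eq_lintegral_encard (hident 0).aemeasurable_snd hident hS]
  refine (lintegral_mono fun ω => ?_).trans_lt (lintegral_ofReal_mul_add_pow_lt_top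
    (fun ω => hL0 (a 0 ω)) (inv_nonneg.2 hδ.le) zero_le_one hmom)
  refine le_trans ?_ (encard_setOf_sum_lt_le m (mul_nonneg (inv_nonneg.2 hδ.le) (hL0 (a 0 ω))))
  exact ENat.toENNReal_le.2 (Set.encard_mono fun J hJ => (lt_inv_mul_iff₀ hδ).2 hJ)

lemma ae_forall_log_one_add_norm_le_mul_add (hident : ∀ J, IdentDistrib (a J) (a 0) μ μ)
    (hmom : ∫⁻ ω, ENNReal.ofReal ((Real.log (1 + ‖a 0 ω‖)) ^ m) ∂μ < ⊤) :
    ∀ᵐ ω ∂μ, ∀ δ > 0, ∃ C, ∀ J, Real.log (1 + ‖a J ω‖) ≤ δ * ((∑ i, J i : ℕ) : ℝ) + C := by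
  filter_upwards [ae_all_iff.2 fun k : ℕ =>
    ae_finite_setOf_mul_lt_log_one_add_norm hident hmom (Nat.one_div_pos_of_nat (n := k))]
    with ω hω δ hδ
  obtain ⟨k, hk⟩ := exists_nat_one_div_lt hδ
  obtain ⟨C, hC⟩ := exists_le_mul_add_of_finite (hω k)
  exact ⟨C, fun J => (hC J).trans (by gcongr)⟩

end Coefficients

theorem stmt_9_general {Ω : Type*} [MeasurableSpace Ω] {μ : Measure Ω} [IsProbabilityMeasure μ]
    (m : ℕ) (a : (Fin m → ℕ) → Ω → ℂ)
    (hident : ∀ J, IdentDistrib (a J) (a 0) μ μ)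
    (hmom : ∫⁻ ω, ENNReal.ofReal ((Real.log (1 + ‖a 0 ω‖)) ^ m) ∂μ < ⊤) :
    ∀ᵐ ω ∂μ, ∀ z : Fin m → ℂ,
      Filter.limsup (fun n : ℕ =>
          (((1 / n : ℝ) * Real.log (‖ellipticPoly a n ω z‖) : ℝ) : EReal))
        atTop ≤
        (((1 / 2) * Real.log (1 + ∑ i, ‖z i‖ ^ 2) : ℝ) : EReal) :=
  (ae_forall_log_one_add_norm_le_mul_add hident hmom).mono fun _ hω =>
    limsup_log_norm_ellipticPoly_le hω

/-- Step 1 (upper bound) in the proof of Theorem 1.1, elliptic ensemble: if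
`E[(log(1+|a_J|))^m] < ∞` then almost surely, for every `z ∈ ℂ^m`,
`limsup_n (1/n) log|G_n(z)| ≤ (1/2) log(1+‖z‖²)`. -/
theorem stmt_9 {Ω : Type*} [MeasurableSpace Ω] {μ : Measure Ω} [IsProbabilityMeasure μ]
    (m : ℕ) (hm : 1 ≤ m) (a : (Fin m → ℕ) → Ω → ℂ)
    (hmeas : ∀ J, Measurable (a J))
    (hindep : iIndepFun a μ)
    (hident : ∀ J, IdentDistrib (a J) (a 0) μ μ)
    (hmom : ∫⁻ ω, ENNReal.ofReal ((Real.log (1 + ‖a 0 ω‖)) ^ m) ∂μ < ⊤) :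
    ∀ᵐ ω ∂μ, ∀ z : Fin m → ℂ,
      Filter.limsup (fun n : ℕ =>
          (((1 / n : ℝ) * Real.log (‖ellipticPoly a n ω z‖) : ℝ) : EReal))
        atTop ≤
        (((1 / 2) * Real.log (1 + ∑ i, ‖z i‖ ^ 2) : ℝ) : EReal) :=
  stmt_9_general m a hident hmom
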